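/- Let S be an association scheme with thin thin residue, i.e. O^ϑ(S) ⊆ O_ϑ(S). Then S is a p-transitive scheme if and only if S = ⟨S_{p'}⟩, where S_{p'} = {R_i ∈ S : p ∤ k_i}. -/

import Mathlib

open scoped Classical

/-- An association scheme of class `d` on a nonempty finite set `X`:
a partition of `X × X` into nonempty relations `r 0, …, r d` with
`r 0` the diagonal, closed under converse (`star`), and with
intersection numbers `pNum i j k`. -/
structure AssocScheme (X : Type*) [Fintype X] [Nonempty X] (d : ℕ) where
  r : Fin (d + 1) → Set (X × X)
  r_nonempty : ∀ i, (r i).Nonempty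
  existsUnique_rel : ∀ q : X × X, ∃! i, q ∈ r i
  r_zero : r 0 = {q : X × X | q.1 = q.2}
  star : Fin (d + 1) → Fin (d + 1)
  mem_star : ∀ (i : Fin (d + 1)) (q : X × X), q ∈ r (star i) ↔ (q.2, q.1) ∈ r i
  pNum : Fin (d + 1) → Fin (d + 1) → Fin (d + 1) → ℕ
  ncard_eq : ∀ (i j k : Fin (d + 1)), ∀ q ∈ r k,
    {z : X | (q.1, z) ∈ r i ∧ (z, q.2) ∈ r j}.ncard = pNum i j k

namespace AssocScheme

variable {X : Type*} [Fintype X] [Nonempty X] {d : ℕ}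

/-- The valency `k_i = p_{i i*}^0` of the relation `R_i`. -/
def val (S : AssocScheme X d) (i : Fin (d + 1)) : ℕ := S.pNum i (S.star i) 0

/-- The complex product `UV = {R_k : p_{uv}^k > 0 for some R_u ∈ U, R_v ∈ V}`. -/
def cmul (S : AssocScheme X d) (U V : Set (Fin (d + 1))) : Set (Fin (d + 1)) :=
  {k | ∃ u ∈ U, ∃ v ∈ V, 0 < S.pNum u v k}

/-- A nonempty subset `T` is closed if `T*T ⊆ T`. -/
def IsClosedSubset (S : AssocScheme X d) (T : Set (Fin (d + 1))) : Prop :=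
  T.Nonempty ∧ S.cmul (S.star '' T) T ⊆ T

/-- The thin radical `O_ϑ(S) = {R_i : k_i = 1}`. -/
def thinRadical (S : AssocScheme X d) : Set (Fin (d + 1)) := {i | S.val i = 1}

/-- A closed subset `T` is strongly normal if `R_{i*} T R_i ⊆ T` for all `i`. -/
def IsStronglyNormal (S : AssocScheme X d) (T : Set (Fin (d + 1))) : Prop :=
  S.IsClosedSubset T ∧ ∀ i : Fin (d + 1), S.cmul (S.cmul {S.star i} T) {i} ⊆ T

/-- The thin residue `O^ϑ(S)`: the intersection of all strongly normal closed subsets. -/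
def thinResidue (S : AssocScheme X d) : Set (Fin (d + 1)) :=
  ⋂₀ {T | S.IsStronglyNormal T}

/-- `⟨H⟩`: the intersection of all closed subsets containing `H`. -/
def closure (S : AssocScheme X d) (H : Set (Fin (d + 1))) : Set (Fin (d + 1)) :=
  ⋂₀ {T | S.IsClosedSubset T ∧ H ⊆ T}

/-- The adjacency matrix `A̅_i` of `R_i`, with entries in `𝔽`. -/
noncomputable def adj (S : AssocScheme X d) (𝔽 : Type*) [Field 𝔽] (i : Fin (d + 1)) :
    Matrix X X 𝔽 :=
  Matrix.of fun x y => if (x, y) ∈ S.r i then 1 else 0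

/-- `v` spans a trivial `𝔽S`-submodule of the regular `𝔽S`-module:
`v` is a nonzero element of `𝔽S` with `A̅_i v = k̅_i v` for all `i`. -/
def IsTrivialVector (S : AssocScheme X d) (𝔽 : Type*) [Field 𝔽] (v : Matrix X X 𝔽) : Prop :=
  v ≠ 0 ∧ v ∈ Submodule.span 𝔽 (Set.range (S.adj 𝔽)) ∧
    ∀ i : Fin (d + 1), S.adj 𝔽 i * v = (S.val i : 𝔽) • v

/-- `S` is `p`-transitive over `𝔽` (of characteristic `p`) if the regular `𝔽S`-module
contains a unique trivial `𝔽S`-submodule. -/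
def IsPTransitive (S : AssocScheme X d) (𝔽 : Type*) [Field 𝔽] : Prop :=
  ∃! W : Submodule 𝔽 (Matrix X X 𝔽),
    ∃ v : Matrix X X 𝔽, S.IsTrivialVector 𝔽 v ∧ W = Submodule.span 𝔽 {v}

/-- A subset `T ⊆ S` is singular if `O_ϑ(S) ⊆ T` and
`R_x R_{y*} R_y R_z ⊆ T` for all `R_x ∈ O_ϑ(S)`, `R_y ∈ S`, `R_z ∈ T`. -/
def IsSingular (S : AssocScheme X d) (T : Set (Fin (d + 1))) : Prop :=
  S.thinRadical ⊆ T ∧ ∀ x ∈ S.thinRadical, ∀ y : Fin (d + 1), ∀ z ∈ T,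
    S.cmul (S.cmul (S.cmul {x} {S.star y}) {y}) {z} ⊆ T

/-- `S_{p'} = {R_i ∈ S : p ∤ k_i}`. -/
def pPrimePart (S : AssocScheme X d) (p : ℕ) : Set (Fin (d + 1)) :=
  {i | ¬ p ∣ S.val i}

end AssocScheme


/-!
Under the hypothesis `O^ϑ(S) ⊆ O_ϑ(S)`, any two points of a sphere `xR_j` are joined by a thin
relation, because `R_{j*}R_j ⊆ O^ϑ(S)`. Write `Row(v)` for the set of relations along which the
rows of a matrix `v` agree; it is always a closed subset. Summing the eigenvector equation
`A̅_j v = k̅_j v` over the sphere `xR_j` shows that `v` satisfies all of these equations exactly when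
`S_{p'} ⊆ Row(v)`: thin relations have one-point spheres, relations with `p ∤ k_j` can be cancelled,
and for `p ∣ k_j` both sides vanish. If `⟨S_{p'}⟩ = S`, the rows of a trivial vector are all equal,
so it is a multiple of the all-ones matrix. Otherwise the indicator matrix of `⟨S_{p'}⟩` spans a
second trivial submodule.
-/

namespace AssocScheme

variable {X : Type*} [Fintype X] [Nonempty X] {d : ℕ} (S : AssocScheme X d)

section Relations

lemma eq_of_mem_r {q : X × X} {i j : Fin (d + 1)} (hi : q ∈ S.r i) (hj : q ∈ S.r j) : i = j :=
  (S.existsUnique_rel q).unique hi hj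

lemma diag_mem_r_zero (x : X) : (x, x) ∈ S.r 0 := by
  rw [S.r_zero]
  rfl

lemma mem_r_star {i : Fin (d + 1)} {x y : X} : (x, y) ∈ S.r (S.star i) ↔ (y, x) ∈ S.r i :=
  S.mem_star i (x, y)

lemma star_star (i : Fin (d + 1)) : S.star (S.star i) = i := by
  obtain ⟨⟨a, b⟩, hab⟩ := S.r_nonempty i
  exact S.eq_of_mem_r (S.mem_r_star.2 (S.mem_r_star.2 hab)) hab

lemma pNum_pos_of_mem {u v k : Fin (d + 1)} {x y z : X} (hxz : (x, z) ∈ S.r u)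
    (hzy : (z, y) ∈ S.r v) (hxy : (x, y) ∈ S.r k) : 0 < S.pNum u v k := by
  rw [← S.ncard_eq u v k (x, y) hxy]
  exact (Set.ncard_pos (Set.toFinite _)).2 ⟨z, hxz, hzy⟩

lemma exists_mem_of_pNum_pos {u v k : Fin (d + 1)} (hp : 0 < S.pNum u v k) {x y : X}
    (hxy : (x, y) ∈ S.r k) : ∃ z, (x, z) ∈ S.r u ∧ (z, y) ∈ S.r v := by
  rw [← S.ncard_eq u v k (x, y) hxy] at hp
  exact (Set.ncard_pos (Set.toFinite _)).1 hp

lemma pNum_zero_self_pos (u : Fin (d + 1)) : 0 < S.pNum u 0 u := by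
  obtain ⟨⟨a, b⟩, hab⟩ := S.r_nonempty u
  exact S.pNum_pos_of_mem hab (S.diag_mem_r_zero b) hab

noncomputable def sphere (j : Fin (d + 1)) (x : X) : Finset X :=
  Finset.univ.filter fun z => (x, z) ∈ S.r j

@[simp]
lemma mem_sphere {j : Fin (d + 1)} {x z : X} : z ∈ S.sphere j x ↔ (x, z) ∈ S.r j := by
  simp [sphere]

lemma card_sphere (j : Fin (d + 1)) (x : X) : (S.sphere j x).card = S.val j := by
  rw [val, ← S.ncard_eq j (S.star j) 0 (x, x) (S.diag_mem_r_zero x), ← Set.ncard_coe_finset]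
  congr 1
  ext z
  simp [S.mem_r_star]

lemma sphere_nonempty (j : Fin (d + 1)) (x : X) : (S.sphere j x).Nonempty := by
  obtain ⟨⟨a, b⟩, hab⟩ := S.r_nonempty j
  rw [← Finset.card_pos, S.card_sphere, ← S.card_sphere j a]
  exact Finset.card_pos.2 ⟨b, S.mem_sphere.2 hab⟩

end Relations

section ClosedSubsets

variable {T : Set (Fin (d + 1))} {α : Type*}

lemma zero_mem_of_isClosedSubset (hT : S.IsClosedSubset T) : 0 ∈ T := by
  obtain ⟨⟨t, ht⟩, hmul⟩ := hT
  obtain ⟨⟨a, b⟩, hab⟩ := S.r_nonempty t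
  exact hmul ⟨S.star t, ⟨t, ht, rfl⟩, t, ht,
    S.pNum_pos_of_mem (S.mem_r_star.2 hab) hab (S.diag_mem_r_zero b)⟩

lemma star_mem_of_isClosedSubset (hT : S.IsClosedSubset T) {t : Fin (d + 1)} (ht : t ∈ T) :
    S.star t ∈ T :=
  hT.2 ⟨S.star t, ⟨t, ht, rfl⟩, 0, S.zero_mem_of_isClosedSubset hT, S.pNum_zero_self_pos _⟩

lemma mem_of_mem_r_of_isClosedSubset (hT : S.IsClosedSubset T) {u v w : Fin (d + 1)}
    (hu : u ∈ T) (hv : v ∈ T) {x y z : X} (hxz : (x, z) ∈ S.r u) (hzy : (z, y) ∈ S.r v)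
    (hxy : (x, y) ∈ S.r w) : w ∈ T :=
  hT.2 ⟨u, ⟨S.star u, S.star_mem_of_isClosedSubset hT hu, S.star_star u⟩, v, hv,
    S.pNum_pos_of_mem hxz hzy hxy⟩

lemma univ_isClosedSubset : S.IsClosedSubset Set.univ :=
  ⟨Set.univ_nonempty, Set.subset_univ _⟩

lemma subset_closure (H : Set (Fin (d + 1))) : H ⊆ S.closure H :=
  fun _ hh _ hT => hT.2 hh

lemma closure_subset {H : Set (Fin (d + 1))} (hT : S.IsClosedSubset T) (hHT : H ⊆ T) :
    S.closure H ⊆ T :=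
  Set.sInter_subset_of_mem ⟨hT, hHT⟩

lemma closure_isClosedSubset (H : Set (Fin (d + 1))) : S.IsClosedSubset (S.closure H) := by
  refine ⟨⟨0, fun T hT => S.zero_mem_of_isClosedSubset hT.1⟩, ?_⟩
  rintro k ⟨_, ⟨u, hu, rfl⟩, v, hv, hp⟩ T hT
  exact hT.1.2 ⟨S.star u, ⟨u, hu T hT, rfl⟩, v, hv T hT, hp⟩

def rowEqRels (v : Matrix X X α) : Set (Fin (d + 1)) :=
  {k | ∀ a b, (a, b) ∈ S.r k → v a = v b}

lemma isClosedSubset_rowEqRels (v : Matrix X X α) : S.IsClosedSubset (S.rowEqRels v) := by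
  refine ⟨⟨0, fun a b hab => ?_⟩, ?_⟩
  · rw [S.r_zero] at hab
    rw [show a = b from hab]
  · rintro k ⟨_, ⟨u, hu, rfl⟩, w, hw, hp⟩ a b hab
    obtain ⟨z, haz, hzb⟩ := S.exists_mem_of_pNum_pos hp hab
    exact (hu z a (S.mem_r_star.1 haz)).symm.trans (hw z b hzb)

lemma thinRadical_subset_pPrimePart (p : ℕ) [Fact p.Prime] : S.thinRadical ⊆ S.pPrimePart p := by
  intro i (hi : S.val i = 1) hp
  rw [hi, Nat.dvd_one] at hp
  exact (Fact.out : p.Prime).ne_one hp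

lemma cmul_star_self_subset_thinResidue (j : Fin (d + 1)) :
    S.cmul {S.star j} {j} ⊆ S.thinResidue := by
  rintro k ⟨u, hu, v, hv, hp⟩ N ⟨hN, hNnormal⟩
  rw [Set.mem_singleton_iff] at hu hv
  rw [hu, hv] at hp
  exact hNnormal j ⟨S.star j,
    ⟨S.star j, rfl, 0, S.zero_mem_of_isClosedSubset hN, S.pNum_zero_self_pos _⟩, j, rfl, hp⟩

lemma mem_thinRadical_of_mem_sphere (httr : S.thinResidue ⊆ S.thinRadical)
    {j k : Fin (d + 1)} {x z z' : X} (hz : z ∈ S.sphere j x) (hz' : z' ∈ S.sphere j x)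
    (hk : (z, z') ∈ S.r k) : k ∈ S.thinRadical :=
  httr <| S.cmul_star_self_subset_thinResidue j
    ⟨_, rfl, _, rfl, S.pNum_pos_of_mem (S.mem_r_star.2 (S.mem_sphere.1 hz)) (S.mem_sphere.1 hz') hk⟩

lemma row_eq_of_mem_sphere (httr : S.thinResidue ⊆ S.thinRadical) {v : Matrix X X α}
    (hthin : S.thinRadical ⊆ S.rowEqRels v) {j : Fin (d + 1)} {x z z' : X}
    (hz : z ∈ S.sphere j x) (hz' : z' ∈ S.sphere j x) : v z = v z' := by
  obtain ⟨k, hk, -⟩ := S.existsUnique_rel (z, z')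
  exact hthin (S.mem_thinRadical_of_mem_sphere httr hz hz' hk) z z' hk

end ClosedSubsets

section TrivialVectors

variable {𝔽 : Type*} [Field 𝔽]

lemma adj_mul_apply (j : Fin (d + 1)) (v : Matrix X X 𝔽) (x y : X) :
    (S.adj 𝔽 j * v) x y = ∑ z ∈ S.sphere j x, v z y := by
  simp [Matrix.mul_apply, adj, sphere, Finset.sum_filter, ite_mul]

lemma sum_sphere_eq_val_mul {j : Fin (d + 1)} {x : X} {f : X → 𝔽} {c : 𝔽}
    (hf : ∀ z ∈ S.sphere j x, f z = c) : ∑ z ∈ S.sphere j x, f z = (S.val j : 𝔽) * c := by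
  rw [Finset.sum_eq_card_nsmul hf, S.card_sphere, nsmul_eq_mul]

lemma row_eq_of_mem_thinRadical {v : Matrix X X 𝔽} {k : Fin (d + 1)}
    (hv : S.adj 𝔽 k * v = (S.val k : 𝔽) • v) (hk : k ∈ S.thinRadical) {a b : X}
    (hab : (a, b) ∈ S.r k) : v a = v b := by
  have hb : b ∈ S.sphere k a := S.mem_sphere.2 hab
  have hsingleton : ∀ z ∈ S.sphere k a, v z = v b := fun z hz =>
    congrArg v (Finset.card_le_one_iff.1 (S.card_sphere k a ▸ hk.le) hz hb)
  funext y
  have hy := congrFun (congrFun hv a) y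
  rw [S.adj_mul_apply, S.sum_sphere_eq_val_mul fun z hz => congrFun (hsingleton z hz) y,
    Matrix.smul_apply, smul_eq_mul, (hk : S.val k = 1)] at hy
  simpa using hy.symm

variable {S}

theorem adj_mul_eq_val_smul_iff (p : ℕ) [Fact p.Prime] [CharP 𝔽 p]
    (httr : S.thinResidue ⊆ S.thinRadical) (v : Matrix X X 𝔽) :
    (∀ j, S.adj 𝔽 j * v = (S.val j : 𝔽) • v) ↔ S.pPrimePart p ⊆ S.rowEqRels v := by
  constructor
  · intro hv j (hj : ¬p ∣ S.val j) a b hab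
    have hthin : S.thinRadical ⊆ S.rowEqRels v := fun k hk _ _ =>
      S.row_eq_of_mem_thinRadical (hv k) hk
    have hval : (S.val j : 𝔽) ≠ 0 := by rwa [Ne, CharP.cast_eq_zero_iff 𝔽 p]
    funext y
    have hy := congrFun (congrFun (hv j) a) y
    rw [S.adj_mul_apply, Matrix.smul_apply, smul_eq_mul, S.sum_sphere_eq_val_mul fun z hz =>
      congrFun (S.row_eq_of_mem_sphere httr hthin hz (S.mem_sphere.2 hab)) y] at hy
    exact (mul_left_cancel₀ hval hy).symm
  · intro hrows j
    ext x y
    rw [S.adj_mul_apply, Matrix.smul_apply, smul_eq_mul]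
    by_cases hj : p ∣ S.val j
    · obtain ⟨z₀, hz₀⟩ := S.sphere_nonempty j x
      rw [S.sum_sphere_eq_val_mul fun z hz => congrFun (S.row_eq_of_mem_sphere httr
          ((S.thinRadical_subset_pPrimePart p).trans hrows) hz hz₀) y,
        (CharP.cast_eq_zero_iff 𝔽 p _).2 hj, zero_mul, zero_mul]
    · exact S.sum_sphere_eq_val_mul fun z hz =>
        congrFun (hrows hj x z (S.mem_sphere.1 hz)).symm y

variable (S 𝔽)

noncomputable def indicatorMatrix (T : Set (Fin (d + 1))) : Matrix X X 𝔽 :=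
  ∑ i, (if i ∈ T then 1 else 0 : 𝔽) • S.adj 𝔽 i

variable {S 𝔽}

lemma sum_smul_adj_apply (c : Fin (d + 1) → 𝔽) {k : Fin (d + 1)} {a b : X}
    (hab : (a, b) ∈ S.r k) : (∑ i, c i • S.adj 𝔽 i) a b = c k := by
  rw [Matrix.sum_apply, Finset.sum_eq_single k]
  · simp [adj, hab]
  · intro i _ hik
    have hi : (a, b) ∉ S.r i := fun h => hik (S.eq_of_mem_r h hab)
    simp [adj, hi]
  · simp

lemma exists_apply_eq_of_mem_span {v : Matrix X X 𝔽}
    (hv : v ∈ Submodule.span 𝔽 (Set.range (S.adj 𝔽))) :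
    ∃ c : Fin (d + 1) → 𝔽, ∀ k a b, (a, b) ∈ S.r k → v a b = c k := by
  obtain ⟨c, rfl⟩ := (Submodule.mem_span_range_iff_exists_fun 𝔽).1 hv
  exact ⟨c, fun _ _ _ => sum_smul_adj_apply c⟩

lemma indicatorMatrix_apply (T : Set (Fin (d + 1))) {k : Fin (d + 1)} {a b : X}
    (hab : (a, b) ∈ S.r k) : S.indicatorMatrix 𝔽 T a b = if k ∈ T then 1 else 0 :=
  sum_smul_adj_apply _ hab

lemma subset_rowEqRels_indicatorMatrix {T : Set (Fin (d + 1))} (hT : S.IsClosedSubset T) :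
    T ⊆ S.rowEqRels (S.indicatorMatrix 𝔽 T) := by
  intro m hm a b hab
  funext y
  obtain ⟨k, hk, -⟩ := S.existsUnique_rel (a, y)
  obtain ⟨l, hl, -⟩ := S.existsUnique_rel (b, y)
  rw [indicatorMatrix_apply T hk, indicatorMatrix_apply T hl]
  refine if_congr ⟨fun hkT => ?_, fun hlT => ?_⟩ rfl rfl
  · exact S.mem_of_mem_r_of_isClosedSubset hT (S.star_mem_of_isClosedSubset hT hm) hkT
      (S.mem_r_star.2 hab) hk hl
  · exact S.mem_of_mem_r_of_isClosedSubset hT hm hlT hab hl hk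

lemma isTrivialVector_indicatorMatrix (p : ℕ) [Fact p.Prime] [CharP 𝔽 p]
    (httr : S.thinResidue ⊆ S.thinRadical) {T : Set (Fin (d + 1))} (hT : S.IsClosedSubset T)
    (hpT : S.pPrimePart p ⊆ T) : S.IsTrivialVector 𝔽 (S.indicatorMatrix 𝔽 T) := by
  obtain ⟨x⟩ := ‹Nonempty X›
  refine ⟨fun h => ?_, ?_, (adj_mul_eq_val_smul_iff p httr _).2
    (hpT.trans (subset_rowEqRels_indicatorMatrix hT))⟩
  · have hx := congrFun (congrFun h x) x
    rw [indicatorMatrix_apply T (S.diag_mem_r_zero x),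
      if_pos (S.zero_mem_of_isClosedSubset hT)] at hx
    exact one_ne_zero hx
  · exact Submodule.sum_mem _ fun i _ => Submodule.smul_mem _ _ (Submodule.subset_span ⟨i, rfl⟩)

lemma eq_of_span_indicatorMatrix_eq {T U : Set (Fin (d + 1))} (hT : 0 ∈ T) (hU : 0 ∈ U)
    (h : Submodule.span 𝔽 {S.indicatorMatrix 𝔽 T} = Submodule.span 𝔽 {S.indicatorMatrix 𝔽 U}) :
    T = U := by
  obtain ⟨x⟩ := ‹Nonempty X›
  obtain ⟨c, hc⟩ := Submodule.mem_span_singleton.1 (h ▸ Submodule.mem_span_singleton_self _)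
  have hc1 : c = 1 := by
    simpa [indicatorMatrix_apply _ (S.diag_mem_r_zero x), hT, hU] using
      congrFun (congrFun hc x) x
  ext k
  obtain ⟨⟨a, b⟩, hab⟩ := S.r_nonempty k
  have hk := congrFun (congrFun hc a) b
  rw [hc1, one_smul, indicatorMatrix_apply _ hab, indicatorMatrix_apply _ hab] at hk
  by_cases hkT : k ∈ T <;> by_cases hkU : k ∈ U <;> simp_all

lemma eq_smul_indicatorMatrix_univ {v : Matrix X X 𝔽}
    (hv : v ∈ Submodule.span 𝔽 (Set.range (S.adj 𝔽))) (hrows : S.rowEqRels v = Set.univ) :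
    ∃ c : 𝔽, v = c • S.indicatorMatrix 𝔽 Set.univ := by
  obtain ⟨c, hc⟩ := exists_apply_eq_of_mem_span hv
  refine ⟨c 0, funext fun a => funext fun b => ?_⟩
  obtain ⟨k, hk, -⟩ := S.existsUnique_rel (a, b)
  have hab : v a = v b := (hrows ▸ Set.mem_univ k : k ∈ S.rowEqRels v) a b hk
  simp [hab, hc 0 b b (S.diag_mem_r_zero b), indicatorMatrix_apply _ hk]

end TrivialVectors

end AssocScheme

/-- **Theorem B.** A scheme with thin thin residue is `p`-transitive iff `S = ⟨S_{p'}⟩`. -/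
theorem thinThinResidue_isPTransitive_iff
    {X : Type*} [Fintype X] [Nonempty X] {d : ℕ} (S : AssocScheme X d)
    (𝔽 : Type*) [Field 𝔽] (p : ℕ) [Fact p.Prime] [CharP 𝔽 p]
    (httr : S.thinResidue ⊆ S.thinRadical) :
    S.IsPTransitive 𝔽 ↔ S.closure (S.pPrimePart p) = Set.univ := by
  have hJ : S.IsTrivialVector 𝔽 (S.indicatorMatrix 𝔽 Set.univ) :=
    S.isTrivialVector_indicatorMatrix p httr S.univ_isClosedSubset (Set.subset_univ _)
  constructor
  · intro hPT
    have hclosed := S.closure_isClosedSubset (S.pPrimePart p)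
    have hT := S.isTrivialVector_indicatorMatrix (𝔽 := 𝔽) p httr hclosed (S.subset_closure _)
    exact AssocScheme.eq_of_span_indicatorMatrix_eq (S.zero_mem_of_isClosedSubset hclosed)
      (Set.mem_univ 0) (hPT.unique ⟨_, hT, rfl⟩ ⟨_, hJ, rfl⟩)
  · intro hcl
    refine ⟨_, ⟨_, hJ, rfl⟩, ?_⟩
    rintro _ ⟨v, hv, rfl⟩
    have hrows : S.rowEqRels v = Set.univ := Set.eq_univ_of_univ_subset <| hcl ▸
      S.closure_subset (S.isClosedSubset_rowEqRels v)
        ((AssocScheme.adj_mul_eq_val_smul_iff (𝔽 := 𝔽) p httr v).1 hv.2.2)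
    obtain ⟨c, rfl⟩ := AssocScheme.eq_smul_indicatorMatrix_univ hv.2.1 hrows
    have hc : c ≠ 0 := by
      rintro rfl
      exact hv.1 (zero_smul _ _)
    exact Submodule.span_singleton_smul_eq (IsUnit.mk0 c hc) _
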